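/- arXiv:1712.00939 — 3 statements merged into one kernel-verified Lean document; each statement's English description precedes it below -/
import Mathlib

section
/- Let n ≥ 4 be an even integer and let m ≥ n/2. Then for every Y ∈ ℝ^n and all X ≠ Y, Δ_X 𝒦_m(X,Y) = 𝒦_{m−1}(X,Y), where Δ_X denotes the Laplacian with respect to the X variable. (For m = n/2 the right-hand side is given by the power formula for 𝒦_{n/2−1}, and for m > n/2 by the logarithmic formula for 𝒦_{m−1}.) -/
/-!
With `s = ‖X - Y‖²`, a radial function `f s` has Laplacian `4 s f''(s) + 2 n f'(s)`; for
`f s = s ^ b (½ log s + c)` this gives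
`Δ (r ^ (2b) (log r + c)) = r ^ (2b - 2) (δ_{2b} (log r + c) + 4b + n - 2)`.
For even `n`, `𝒦_{n/2+k}` is `r ^ (2k) (log r + c_{n/2+k})` over a denominator `D_k` with
`D_{k+1} = D_k δ_{2k+2}`. When `k = 0` the logarithm disappears because `δ_0 = 0`, and what is
left is the power formula for `𝒦_{n/2-1}`. When `k ≥ 1`, the identity
`δ_s (1/s + 1/(s+n-2)) = 2s + n - 2` absorbs the constant term `4k + n - 2` into the shift
from `c_{n/2+k}` to `c_{n/2+k-1}`.
-/

open MeasureTheory Filter Metric Set Topology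
open scoped ENNReal NNReal RealInnerProductSpace

noncomputable section

/-- `n`-dimensional Euclidean space. -/
abbrev Euc (n : ℕ) : Type := EuclideanSpace ℝ (Fin n)

/-- The surface measure on `∂D`: the `(n-1)`-dimensional Hausdorff measure
restricted to the boundary of `D`. -/
def surfMeasure (n : ℕ) (D : Set (Euc n)) : Measure (Euc n) :=
  (Measure.hausdorffMeasure ((n : ℝ) - 1)).restrict (frontier D)

/-- `ω_{n-1} = 2 π^{n/2} / Γ(n/2)`, the surface area of the unit sphere in `ℝⁿ`. -/
def sphereArea (n : ℕ) : ℝ := 2 * Real.pi ^ ((n : ℝ) / 2) / Real.Gamma ((n : ℝ) / 2)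

/-- First (horizontal) component of a point in the chart target space. -/
def chartFst {k : ℕ} (y : WithLp 2 (Euc k × ℝ)) : Euc k := ((WithLp.equiv 2 (Euc k × ℝ)) y).1

/-- Second (vertical) component of a point in the chart target space. -/
def chartSnd {k : ℕ} (y : WithLp 2 (Euc k × ℝ)) : ℝ := ((WithLp.equiv 2 (Euc k × ℝ)) y).2

/-- `U, A, φ` is a graph chart for `D` near the boundary point `Q`: `U` is an open
neighborhood of `Q` and, in the rigid coordinates given by the (affine) isometry `A`,
`D` coincides near `Q` with the region above the graph of `φ` and `∂D` with the graph. -/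
def IsGraphChartAt (n : ℕ) (D : Set (Euc n)) (Q : Euc n) (U : Set (Euc n))
    (A : Euc n ≃ᵃⁱ[ℝ] WithLp 2 (Euc (n - 1) × ℝ)) (φ : Euc (n - 1) → ℝ) : Prop :=
  IsOpen U ∧ Q ∈ U ∧
    (∀ X ∈ U, (X ∈ D ↔ φ (chartFst (A X)) < chartSnd (A X))) ∧
    (∀ X ∈ U, (X ∈ frontier D ↔ chartSnd (A X) = φ (chartFst (A X))))

/-- `D ⊆ ℝⁿ` is a bounded Lipschitz domain with Lipschitz character (at most) `L`. -/
def IsBddLipschitzDomain (n : ℕ) (L : ℝ) (D : Set (Euc n)) : Prop :=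
  IsOpen D ∧ Bornology.IsBounded D ∧ IsConnected D ∧ IsConnected (frontier D) ∧
    ∀ Q ∈ frontier D, ∃ U A φ, LipschitzWith (Real.toNNReal L) φ ∧ IsGraphChartAt n D Q U A φ

/-- `D ⊆ ℝⁿ` is a bounded `C¹` domain. -/
def IsBddC1Domain (n : ℕ) (D : Set (Euc n)) : Prop :=
  IsOpen D ∧ Bornology.IsBounded D ∧ IsConnected D ∧ IsConnected (frontier D) ∧
    ∀ Q ∈ frontier D, ∃ U A φ, ContDiff ℝ 1 φ ∧ IsGraphChartAt n D Q U A φ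

/-- `ν` is the outward unit normal of `D` at the boundary point `P`: in suitable graph
coordinates in which `D` lies above the graph of `φ`, the function `φ` is differentiable
at the point below `P` with gradient `gφ` and `ν = (gφ, -1)/√(1+|gφ|²)` in these coordinates. -/
def IsOutwardNormalAt (n : ℕ) (D : Set (Euc n)) (P : Euc n) (ν : Euc n) : Prop :=
  ∃ (U : Set (Euc n)) (A : Euc n ≃ᵃⁱ[ℝ] WithLp 2 (Euc (n - 1) × ℝ)) (φ : Euc (n - 1) → ℝ)
    (L : ℝ≥0), LipschitzWith L φ ∧ IsGraphChartAt n D P U A φ ∧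
    ∃ gφ : Euc (n - 1), HasGradientAt φ gφ (chartFst (A P)) ∧
      A.linearIsometryEquiv ν =
        (Real.sqrt (1 + ‖gφ‖ ^ 2))⁻¹ • (WithLp.equiv 2 (Euc (n - 1) × ℝ)).symm (gφ, -1)

/-- The interior non-tangential cone `Γ_γ(P)` with vertex `P ∈ ∂D` and aperture `γ`. -/
def ntCone {n : ℕ} (γ : ℝ) (D : Set (Euc n)) (P : Euc n) : Set (Euc n) :=
  {X | X ∈ D ∧ dist X P < γ * Metric.infDist X (frontier D)}

/-- The exterior non-tangential cone `Γ̃_γ(P)`. -/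
def ntConeExt {n : ℕ} (γ : ℝ) (D : Set (Euc n)) (P : Euc n) : Set (Euc n) :=
  {X | X ∉ closure D ∧ dist X P < γ * Metric.infDist X (frontier D)}

/-- The non-tangential maximal function `M(F)(P) = sup_{X ∈ Γ_γ(P)} |F(X)|`,
valued in `ℝ≥0∞`. -/
def ntMax {n : ℕ} {E : Type*} [NormedAddCommGroup E] (γ : ℝ) (D : Set (Euc n))
    (F : Euc n → E) (P : Euc n) : ℝ≥0∞ :=
  ⨆ X ∈ ntCone γ D P, (‖F X‖₊ : ℝ≥0∞)

/-- The `L^p` norm of an `ℝ≥0∞`-valued function. -/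
def eLpNormENN {α : Type*} [MeasurableSpace α] (g : α → ℝ≥0∞) (p : ℝ≥0∞)
    (μ : Measure α) : ℝ≥0∞ :=
  if p = ∞ then essSup g μ else (∫⁻ x, g x ^ p.toReal ∂μ) ^ (1 / p.toReal)

/-- The Laplacian `Δu = Σᵢ ∂²u/∂xᵢ²` on `ℝⁿ`. -/
def lap {n : ℕ} (u : Euc n → ℝ) : Euc n → ℝ := fun X =>
  ∑ i : Fin n, fderiv ℝ (fun Y => fderiv ℝ u Y (EuclideanSpace.single i (1 : ℝ))) X
    (EuclideanSpace.single i (1 : ℝ))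

/-- The single layer potential `𝒮f`. -/
def slp (n : ℕ) (σ : Measure (Euc n)) (f : Euc n → ℝ) (X : Euc n) : ℝ :=
  (1 / (sphereArea n * (2 - (n : ℝ)))) * ∫ Q, ‖X - Q‖ ^ (2 - (n : ℝ)) * f Q ∂σ

/-- `KstarAt n σ N f P K` says that the principal value `K*f(P)` exists and equals `K`. -/
def KstarAt (n : ℕ) (σ : Measure (Euc n)) (N : Euc n → Euc n) (f : Euc n → ℝ)
    (P : Euc n) (K : ℝ) : Prop :=
  Tendsto (fun ε : ℝ =>
      (1 / sphereArea n) * ∫ Q in {Q | ε < dist Q P},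
        (⟪P - Q, N P⟫ / dist P Q ^ (n : ℕ)) * f Q ∂σ)
    (𝓝[>] (0 : ℝ)) (𝓝 K)

/-- The Robin coefficient conditions (2.7)–(2.9) for the exponent `p`:
`b ≥ 0` a.e. and `b` not a.e. `0`; `b ∈ L^{n-1}(∂D)`; and `b ∈ L^s` for some `s > 2`
whenever `p = 2` or `n = 3`. -/
def RobinCoef (n : ℕ) (σ : Measure (Euc n)) (p : ℝ) (b : Euc n → ℝ) : Prop :=
  (∀ᵐ P ∂σ, 0 ≤ b P) ∧ ¬(b =ᵐ[σ] (fun _ => (0 : ℝ))) ∧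
    MemLp b (ENNReal.ofReal ((n : ℝ) - 1)) σ ∧
    ((p = 2 ∨ n = 3) → ∃ s : ℝ, 2 < s ∧ MemLp b (ENNReal.ofReal s) σ)

/-- `δ_s = s (s + n - 2)`. -/
def deltaS (n : ℕ) (s : ℝ) : ℝ := s * (s + (n : ℝ) - 2)

/-- `γ_k = δ_{2k - n + 2}`. -/
def gamK (n k : ℕ) : ℝ := deltaS n (2 * (k : ℝ) - (n : ℝ) + 2)

/-- The constant `c_m = 1/n - Σ_{t=1}^{m - n/2} (1/(2t) + 1/(2t + n - 2))`. -/
def polyC (n m : ℕ) : ℝ :=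
  1 / (n : ℝ) - ∑ t ∈ Finset.Icc 1 (m - n / 2), (1 / (2 * (t : ℝ)) + 1 / (2 * (t : ℝ) + (n : ℝ) - 2))

/-- The `m`-th order polyharmonic fundamental solution `𝒦_m(X, Y)` in `ℝⁿ`. -/
def polyK (n m : ℕ) (X Y : Euc n) : ℝ :=
  if m = 1 then ‖X - Y‖ ^ (2 - (n : ℝ)) / (((n : ℝ) - 2) * sphereArea n)
  else if Odd n ∨ 2 * m ≤ n - 2 then
    ‖X - Y‖ ^ (2 * (m : ℝ) - (n : ℝ)) /
      (((n : ℝ) - 2) * sphereArea n * ∏ k ∈ Finset.Icc 1 (m - 1), gamK n k)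
  else
    ‖X - Y‖ ^ (2 * (m : ℝ) - (n : ℝ)) * (Real.log ‖X - Y‖ + polyC n m) /
      (((n : ℝ) - 2) ^ 2 * sphereArea n * (∏ k ∈ Finset.Icc 1 (n / 2 - 2), gamK n k) *
        ∏ t ∈ Finset.Icc 1 (m - n / 2), deltaS n (2 * (t : ℝ)))

/-- The `j`-th layer `𝒮`-potential `𝓜_j f`. -/
def mlp (n j : ℕ) (σ : Measure (Euc n)) (f : Euc n → ℝ) (X : Euc n) : ℝ :=
  ∫ Q, polyK n j X Q * f Q ∂σ

/-- The boundary operator `K_j^* f(P) = ∫_{∂D} ⟨∇_X 𝒦_j(P,Q), N(P)⟩ f(Q) dσ(Q)`. -/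
def KjStar (n j : ℕ) (σ : Measure (Euc n)) (N : Euc n → Euc n) (f : Euc n → ℝ)
    (P : Euc n) : ℝ :=
  ∫ Q, ⟪gradient (fun X => polyK n j X Q) P, N P⟫ * f Q ∂σ

end

lemma hasFDerivAt_norm_sub_sq {n : ℕ} (Y Z : Euc n) :
    HasFDerivAt (fun W : Euc n => ‖W - Y‖ ^ 2) (2 • innerSL ℝ (Z - Y)) Z := by
  simpa using ((hasFDerivAt_id Z).sub_const Y).norm_sq

lemma sq_norm_sub_pos {n : ℕ} {Y Z : Euc n} (hZ : Z ≠ Y) : 0 < ‖Z - Y‖ ^ 2 :=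
  pow_pos (norm_pos_iff.2 (sub_ne_zero.2 hZ)) 2

section Radial

variable {n : ℕ} {f f' f'' : ℝ → ℝ} {Y : Euc n}

lemma fderiv_comp_norm_sub_sq_single (hf : ∀ t, 0 < t → HasDerivAt f (f' t) t)
    {Z : Euc n} (hZ : Z ≠ Y) (i : Fin n) :
    fderiv ℝ (fun W : Euc n => f (‖W - Y‖ ^ 2)) Z (EuclideanSpace.single i 1)
      = f' (‖Z - Y‖ ^ 2) * (2 * (Z i - Y i)) := by
  have hderiv : HasFDerivAt (fun W : Euc n => f (‖W - Y‖ ^ 2)) _ Z :=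
    (hf _ (sq_norm_sub_pos hZ)).comp_hasFDerivAt Z (hasFDerivAt_norm_sub_sq Y Z)
  rw [hderiv.fderiv]
  simp [EuclideanSpace.inner_single_right]

lemma fderiv_fderiv_comp_norm_sub_sq_single (hf : ∀ t, 0 < t → HasDerivAt f (f' t) t)
    (hf' : ∀ t, 0 < t → HasDerivAt f' (f'' t) t) {X : Euc n} (hXY : X ≠ Y) (i : Fin n) :
    fderiv ℝ (fun Z => fderiv ℝ (fun W : Euc n => f (‖W - Y‖ ^ 2)) Z
        (EuclideanSpace.single i 1)) X (EuclideanSpace.single i 1)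
      = 4 * (X i - Y i) ^ 2 * f'' (‖X - Y‖ ^ 2) + 2 * f' (‖X - Y‖ ^ 2) := by
  have hpartial : (fun Z => fderiv ℝ (fun W : Euc n => f (‖W - Y‖ ^ 2)) Z
      (EuclideanSpace.single i 1)) =ᶠ[𝓝 X] fun Z => f' (‖Z - Y‖ ^ 2) * (2 * (Z i - Y i)) := by
    filter_upwards [isOpen_ne.mem_nhds hXY] with Z hZ
    exact fderiv_comp_norm_sub_sq_single hf hZ i
  have hcoord : HasFDerivAt (fun Z : Euc n => 2 * (Z i - Y i))
      ((2 : ℝ) • (EuclideanSpace.proj i : Euc n →L[ℝ] ℝ)) X :=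
    (((EuclideanSpace.proj i : Euc n →L[ℝ] ℝ).hasFDerivAt).sub_const (Y i)).const_mul 2
  have hderiv : HasFDerivAt (fun Z : Euc n => f' (‖Z - Y‖ ^ 2) * (2 * (Z i - Y i))) _ X :=
    ((hf' _ (sq_norm_sub_pos hXY)).comp_hasFDerivAt X (hasFDerivAt_norm_sub_sq Y X)).mul hcoord
  rw [hpartial.fderiv_eq, hderiv.fderiv]
  simp [EuclideanSpace.inner_single_right]
  ring

lemma lap_comp_norm_sub_sq (hf : ∀ t, 0 < t → HasDerivAt f (f' t) t)
    (hf' : ∀ t, 0 < t → HasDerivAt f' (f'' t) t) {X : Euc n} (hXY : X ≠ Y) :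
    lap (fun Z => f (‖Z - Y‖ ^ 2)) X
      = 4 * ‖X - Y‖ ^ 2 * f'' (‖X - Y‖ ^ 2) + 2 * n * f' (‖X - Y‖ ^ 2) := by
  have hsum : ∑ i : Fin n, (X i - Y i) ^ 2 = ‖X - Y‖ ^ 2 := by
    simp [EuclideanSpace.norm_sq_eq, Real.norm_eq_abs, sq_abs]
  simp only [lap, fderiv_fderiv_comp_norm_sub_sq_single hf hf' hXY, Finset.sum_add_distrib,
    ← Finset.sum_mul, ← Finset.mul_sum, hsum, Finset.sum_const, Finset.card_univ,
    Fintype.card_fin, nsmul_eq_mul]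
  ring

end Radial

lemma lap_div_const {n : ℕ} (u : Euc n → ℝ) (D : ℝ) (X : Euc n) :
    lap (fun Z => u Z / D) X = lap u X / D := by
  have hsmul : (fun Z => u Z / D) = D⁻¹ • u := by
    funext Z; simp [div_eq_inv_mul]
  rw [lap, lap, hsmul, fderiv_const_smul_field, div_eq_inv_mul, Finset.mul_sum]
  refine Finset.sum_congr rfl fun i _ => ?_
  have hpartial : (fun Z => (D⁻¹ • fderiv ℝ u) Z (EuclideanSpace.single i 1))
      = D⁻¹ • fun Z => fderiv ℝ u Z (EuclideanSpace.single i 1) := rfl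
  rw [hpartial, fderiv_const_smul_field]
  rfl

lemma hasDerivAt_rpow_mul_log (e α β : ℝ) {t : ℝ} (ht : 0 < t) :
    HasDerivAt (fun s : ℝ => s ^ e * (α * Real.log s + β))
      (t ^ (e - 1) * (e * α * Real.log t + (e * β + α))) t := by
  have hderiv : HasDerivAt (fun s : ℝ => s ^ e * (α * Real.log s + β)) _ t :=
    (Real.hasDerivAt_rpow_const (p := e) (Or.inl ht.ne')).mul
      (((Real.hasDerivAt_log ht.ne').const_mul α).add_const β)
  convert hderiv using 1
  rw [Real.rpow_sub ht, Real.rpow_one]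
  field_simp
  ring

lemma lap_rpow_mul_log_add {n : ℕ} (b c : ℝ) {X Y : Euc n} (hXY : X ≠ Y) :
    lap (fun Z => ‖Z - Y‖ ^ (2 * b) * (Real.log ‖Z - Y‖ + c)) X
      = ‖X - Y‖ ^ (2 * b - 2) * (deltaS n (2 * b) * (Real.log ‖X - Y‖ + c) + (4 * b + n - 2)) := by
  have hsq : ∀ (r : ℝ) (x : ℝ), 0 ≤ r → (r ^ 2) ^ x = r ^ (2 * x) := fun r x hr => by
    rw [← Real.rpow_natCast, ← Real.rpow_mul hr, Nat.cast_ofNat]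
  have hradial : (fun Z : Euc n => ‖Z - Y‖ ^ (2 * b) * (Real.log ‖Z - Y‖ + c))
      = fun Z => (‖Z - Y‖ ^ 2) ^ b * (1 / 2 * Real.log (‖Z - Y‖ ^ 2) + c) := by
    funext Z
    rw [hsq _ _ (norm_nonneg _), Real.log_pow]
    push_cast
    ring
  rw [hradial, lap_comp_norm_sub_sq (fun t ht => hasDerivAt_rpow_mul_log b _ _ ht)
    (fun t ht => hasDerivAt_rpow_mul_log (b - 1) _ _ ht) hXY]
  have hr : 0 < ‖X - Y‖ := norm_pos_iff.2 (sub_ne_zero.2 hXY)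
  rw [hsq _ _ hr.le, hsq _ _ hr.le, Real.log_pow,
    show 2 * (b - 1 - 1) = 2 * (b - 1) - 2 by ring, Real.rpow_sub hr, Real.rpow_two, deltaS]
  field_simp
  ring

lemma deltaS_mul_inv_add_inv (n : ℕ) {s : ℝ} (hs : s ≠ 0) (hsn : s + n - 2 ≠ 0) :
    deltaS n s * (1 / s + 1 / (s + n - 2)) = 2 * s + n - 2 := by
  rw [deltaS]
  field_simp
  ring

lemma polyC_half_add_succ (n k : ℕ) :
    polyC n (n / 2 + (k + 1))
      = polyC n (n / 2 + k) - (1 / (2 * ((k : ℝ) + 1)) + 1 / (2 * ((k : ℝ) + 1) + n - 2)) := by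
  simp only [polyC, Nat.add_sub_cancel_left, Finset.sum_Icc_succ_top (by omega : 1 ≤ k + 1)]
  push_cast
  ring

noncomputable def polyKLogDenom (n k : ℕ) : ℝ :=
  ((n : ℝ) - 2) ^ 2 * sphereArea n * (∏ j ∈ Finset.Icc 1 (n / 2 - 2), gamK n j) *
    ∏ t ∈ Finset.Icc 1 k, deltaS n (2 * (t : ℝ))

lemma polyKLogDenom_zero (n : ℕ) :
    polyKLogDenom n 0
      = ((n : ℝ) - 2) *
          (((n : ℝ) - 2) * sphereArea n * ∏ j ∈ Finset.Icc 1 (n / 2 - 2), gamK n j) := by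
  rw [polyKLogDenom, Finset.Icc_eq_empty_of_lt zero_lt_one, Finset.prod_empty]
  ring

lemma polyKLogDenom_succ (n k : ℕ) :
    polyKLogDenom n (k + 1) = polyKLogDenom n k * deltaS n (2 * ((k : ℝ) + 1)) := by
  rw [polyKLogDenom, polyKLogDenom, Finset.prod_Icc_succ_top (by omega), Nat.cast_succ]
  ring

lemma polyK_half_add {n : ℕ} (hn : 4 ≤ n) (hne : Even n) (k : ℕ) (X Y : Euc n) :
    polyK n (n / 2 + k) X Y
      = ‖X - Y‖ ^ (2 * (k : ℝ)) * (Real.log ‖X - Y‖ + polyC n (n / 2 + k)) / polyKLogDenom n k := by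
  have hhalf : ((n / 2 : ℕ) : ℝ) * 2 = n := by
    exact_mod_cast Nat.div_mul_cancel (even_iff_two_dvd.mp hne)
  have hmod : n % 2 = 0 := Nat.even_iff.mp hne
  rw [polyK, if_neg (by omega), if_neg (not_or.2 ⟨Nat.not_odd_iff_even.mpr hne, by omega⟩),
    Nat.add_sub_cancel_left, polyKLogDenom]
  congr 3
  push_cast
  linarith

lemma polyK_half_sub_one {n : ℕ} (hn : 4 ≤ n) (hne : Even n) (X Y : Euc n) :
    polyK n (n / 2 - 1) X Y
      = ‖X - Y‖ ^ (-2 : ℝ) /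
        (((n : ℝ) - 2) * sphereArea n * ∏ j ∈ Finset.Icc 1 (n / 2 - 2), gamK n j) := by
  rcases eq_or_lt_of_le hn with rfl | hn6
  · rw [polyK, if_pos (by norm_num)]
    norm_num
  · have hhalf : ((n / 2 : ℕ) : ℝ) * 2 = n := by
      exact_mod_cast Nat.div_mul_cancel (even_iff_two_dvd.mp hne)
    have hmod : n % 2 = 0 := Nat.even_iff.mp hne
    rw [polyK, if_neg (by omega), if_pos (Or.inr (by omega)),
      show n / 2 - 1 - 1 = n / 2 - 2 by omega, Nat.cast_sub (by omega)]
    congr 2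
    push_cast
    linarith

lemma lap_polyK_half_add {n : ℕ} (hn : 4 ≤ n) (hne : Even n) (k : ℕ) {X Y : Euc n}
    (hXY : X ≠ Y) :
    lap (fun Z => polyK n (n / 2 + k) Z Y) X
      = ‖X - Y‖ ^ (2 * (k : ℝ) - 2) * (deltaS n (2 * k) * (Real.log ‖X - Y‖ + polyC n (n / 2 + k))
          + (4 * k + n - 2)) / polyKLogDenom n k := by
  simp only [polyK_half_add hn hne]
  rw [lap_div_const, lap_rpow_mul_log_add _ _ hXY]

lemma lap_polyK_half {n : ℕ} (hn : 4 ≤ n) (hne : Even n) {X Y : Euc n} (hXY : X ≠ Y) :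
    lap (fun Z => polyK n (n / 2) Z Y) X = polyK n (n / 2 - 1) X Y := by
  have hn2 : (n : ℝ) - 2 ≠ 0 := by
    have : (4 : ℝ) ≤ n := by exact_mod_cast hn
    linarith
  have hδ : deltaS n (2 * ((0 : ℕ) : ℝ)) = 0 := by simp [deltaS]
  have hlap := lap_polyK_half_add hn hne 0 hXY
  rw [Nat.add_zero] at hlap
  rw [hlap, polyK_half_sub_one hn hne, hδ, polyKLogDenom_zero]
  calc _ = ((n - 2) * ‖X - Y‖ ^ (-2 : ℝ)) /
        ((n - 2) * ((n - 2) * sphereArea n * ∏ j ∈ Finset.Icc 1 (n / 2 - 2), gamK n j)) := by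
        norm_num
        ring
    _ = _ := mul_div_mul_left _ _ hn2

lemma lap_polyK_half_add_succ {n : ℕ} (hn : 4 ≤ n) (hne : Even n) (k : ℕ) {X Y : Euc n}
    (hXY : X ≠ Y) :
    lap (fun Z => polyK n (n / 2 + (k + 1)) Z Y) X = polyK n (n / 2 + k) X Y := by
  set b : ℝ := (k : ℝ) + 1 with hb
  have hbn : 0 < 2 * b + n - 2 := by
    have : (4 : ℝ) ≤ n := by exact_mod_cast hn
    linarith
  have hδ : 0 < deltaS n (2 * b) := mul_pos (by positivity) hbn
  have hs := deltaS_mul_inv_add_inv n (s := 2 * b) (by positivity) hbn.ne'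
  rw [lap_polyK_half_add hn hne _ hXY, polyK_half_add hn hne, polyC_half_add_succ,
    polyKLogDenom_succ, Nat.cast_succ, ← hb]
  have hnum : ‖X - Y‖ ^ (2 * b - 2) * (deltaS n (2 * b) * (Real.log ‖X - Y‖ +
        (polyC n (n / 2 + k) - (1 / (2 * b) + 1 / (2 * b + n - 2)))) + (4 * b + n - 2))
      = ‖X - Y‖ ^ (2 * (k : ℝ)) * (Real.log ‖X - Y‖ + polyC n (n / 2 + k)) * deltaS n (2 * b) := by
    rw [show 2 * b - 2 = 2 * (k : ℝ) by ring]
    linear_combination (-‖X - Y‖ ^ (2 * (k : ℝ))) * hs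
  rw [hnum, mul_div_mul_right _ _ hδ.ne']

/-- For `n ≥ 4` even and `m ≥ n/2`, the logarithmic fundamental
solution satisfies `Δ_X 𝒦_m(X, Y) = 𝒦_{m-1}(X, Y)` for all `X ≠ Y`. -/
theorem polyK_laplacian_log_range (n : ℕ) (hn : 4 ≤ n) (hne : Even n)
    (m : ℕ) (hm : n / 2 ≤ m) (Y X : Euc n) (hXY : X ≠ Y) :
    lap (fun Z => polyK n m Z Y) X = polyK n (m - 1) X Y := by
  obtain ⟨k, rfl⟩ : ∃ k, m = n / 2 + k := ⟨m - n / 2, by omega⟩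
  cases k with
  | zero => exact lap_polyK_half hn hne hXY
  | succ k =>
    rw [show n / 2 + (k + 1) - 1 = n / 2 + k by omega]
    exact lap_polyK_half_add_succ hn hne k hXY
end

section
/- Let n ≥ 3 and m ≥ 1 be integers. Then for every Y ∈ ℝ^n, the function X ↦ 𝒦_m(X,Y) is smooth on ℝ^n \ {Y} and is polyharmonic of order m there, i.e. Δ_X^m 𝒦_m(X,Y) = 0 for all X ≠ Y, where Δ_X^m denotes the m-th iterate of the Laplacian in the X variable. -/
open MeasureTheory Filter Metric Set Topology
open scoped ENNReal NNReal RealInnerProductSpace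

section AuxPolyK

lemma sum_sq_eq {n : ℕ} (v : Euc n) : ∑ i, (v i)^2 = ‖v‖^2 := by
  rw [EuclideanSpace.norm_eq, Real.sq_sqrt (by positivity)]
  simp [Real.norm_eq_abs, sq_abs]

lemma hasFDerivAt_radial {n : ℕ} (Y : Euc n) (g g' : ℝ → ℝ)
    (h1 : ∀ t, 0 < t → HasDerivAt g (g' t) t) (Z : Euc n) (hZ : Z ≠ Y) :
    HasFDerivAt (fun W : Euc n => g (‖W - Y‖ ^ 2))
      ((g' (‖Z - Y‖ ^ 2) * 2) • (innerSL ℝ (Z - Y))) Z := by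
  have hq : HasFDerivAt (fun W : Euc n => ‖W - Y‖ ^ 2)
      (2 • (innerSL ℝ (Z - Y)).comp (ContinuousLinearMap.id ℝ (Euc n))) Z :=
    ((hasFDerivAt_id Z).sub_const Y).norm_sq
  have h0 : (0:ℝ) < ‖Z - Y‖ ^ 2 := by
    have h : (0:ℝ) < ‖Z - Y‖ := by simpa [sub_eq_zero] using norm_pos_iff.2 (sub_ne_zero.2 hZ)
    positivity
  have := (h1 _ h0).comp_hasFDerivAt Z hq
  refine this.congr_fderiv ?_
  ext w
  simp
  ring

lemma lap_radial {n : ℕ} (Y : Euc n) (g g' g'' : ℝ → ℝ)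
    (h1 : ∀ t, 0 < t → HasDerivAt g (g' t) t)
    (h2 : ∀ t, 0 < t → HasDerivAt g' (g'' t) t)
    (X : Euc n) (hX : X ≠ Y) :
    lap (fun Z => g (‖Z - Y‖ ^ 2)) X =
      4 * ‖X - Y‖ ^ 2 * g'' (‖X - Y‖ ^ 2) + 2 * n * g' (‖X - Y‖ ^ 2) := by
  have hU : {Y}ᶜ ∈ 𝓝 X := (isOpen_compl_singleton).mem_nhds hX
  have hfd : ∀ (i : Fin n),
      fderiv ℝ (fun Z => fderiv ℝ (fun W : Euc n => g (‖W - Y‖ ^ 2)) Z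
          (EuclideanSpace.single i (1 : ℝ))) X (EuclideanSpace.single i (1 : ℝ)) =
        (g'' (‖X - Y‖ ^ 2) * 2 * (X i - Y i)) * (2 * (X i - Y i)) +
          g' (‖X - Y‖ ^ 2) * 2 := by
    intro i
    have heq : (fun Z => fderiv ℝ (fun W : Euc n => g (‖W - Y‖ ^ 2)) Z
          (EuclideanSpace.single i (1 : ℝ)))
        =ᶠ[𝓝 X] (fun Z => g' (‖Z - Y‖ ^ 2) * (2 * (Z i - Y i))) := by
      filter_upwards [hU] with Z hZ
      rw [(hasFDerivAt_radial Y g g' h1 Z hZ).fderiv]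
      simp [EuclideanSpace.inner_single_right, PiLp.sub_apply]
      ring
    rw [heq.fderiv_eq]
    have hA : HasFDerivAt (fun Z : Euc n => g' (‖Z - Y‖ ^ 2))
        ((g'' (‖X - Y‖ ^ 2) * 2) • (innerSL ℝ (X - Y))) X :=
      hasFDerivAt_radial Y g' g'' h2 X hX
    have hB : HasFDerivAt (fun Z : Euc n => 2 * (Z i - Y i))
        ((2:ℝ) • (EuclideanSpace.proj i : Euc n →L[ℝ] ℝ)) X := by
      have h0 : HasFDerivAt (fun Z : Euc n => Z i)
          (EuclideanSpace.proj (𝕜 := ℝ) i) X :=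
        (EuclideanSpace.proj (𝕜 := ℝ) i).hasFDerivAt
      simpa using (h0.sub_const (Y i)).const_mul 2
    rw [(show HasFDerivAt (fun Z : Euc n => g' (‖Z - Y‖ ^ 2) * (2 * (Z i - Y i))) _ X
      from hA.mul hB).fderiv]
    simp [EuclideanSpace.inner_single_right, PiLp.sub_apply, PiLp.proj_apply]
    ring
  unfold lap
  rw [Finset.sum_congr rfl (fun i _ => hfd i)]
  rw [Finset.sum_add_distrib]
  simp only [Finset.sum_const, Finset.card_univ, Fintype.card_fin, nsmul_eq_mul]
  have : ∑ i : Fin n, (g'' (‖X - Y‖ ^ 2) * 2 * (X i - Y i)) * (2 * (X i - Y i))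
      = 4 * ‖X - Y‖^2 * g'' (‖X - Y‖ ^ 2) := by
    have e1 : ∀ i : Fin n, (g'' (‖X - Y‖ ^ 2) * 2 * (X i - Y i)) * (2 * (X i - Y i))
        = ((X - Y) i)^2 * (4 * g'' (‖X - Y‖ ^ 2)) := by
      intro i; simp only [PiLp.sub_apply]; ring
    rw [Finset.sum_congr rfl (fun i _ => e1 i), ← Finset.sum_mul, sum_sq_eq]
    ring
  rw [this]
  ring

lemma lap_congr {n : ℕ} {u v : Euc n → ℝ} {X : Euc n} (h : u =ᶠ[𝓝 X] v) :
    lap u X = lap v X := by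
  unfold lap
  refine Finset.sum_congr rfl fun i _ => ?_
  have h2 : (fun Z => fderiv ℝ u Z (EuclideanSpace.single i (1:ℝ)))
      =ᶠ[𝓝 X] (fun Z => fderiv ℝ v Z (EuclideanSpace.single i (1:ℝ))) := by
    filter_upwards [h.eventuallyEq_nhds] with Z hZ
    rw [hZ.fderiv_eq]
  rw [h2.fderiv_eq]

lemma lap_rpow {n : ℕ} (Y : Euc n) (s A : ℝ) (X : Euc n) (hX : X ≠ Y) :
    lap (fun Z => ‖Z - Y‖ ^ s * A) X
      = s * (s + n - 2) * ‖X - Y‖ ^ (s - 2) * A := by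
  have hr : (0:ℝ) < ‖X - Y‖ := by
    simpa [sub_eq_zero] using norm_pos_iff.2 (sub_ne_zero.2 hX)
  have key : lap (fun Z => (‖Z - Y‖ ^ 2 : ℝ) ^ (s/2) * A) X
      = 4 * ‖X - Y‖ ^ 2 * ((s/2 * (s/2 - 1) * (‖X - Y‖^2) ^ (s/2 - 2)) * A)
        + 2 * n * ((s/2 * (‖X - Y‖^2) ^ (s/2 - 1)) * A) := by
    refine lap_radial Y (fun t => t ^ (s/2) * A) (fun t => s/2 * t ^ (s/2 - 1) * A)
      (fun t => s/2 * (s/2 - 1) * t ^ (s/2 - 2) * A) ?_ ?_ X hX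
    · intro t ht
      exact (Real.hasDerivAt_rpow_const (Or.inl ht.ne')).mul_const A
    · intro t ht
      have := ((Real.hasDerivAt_rpow_const (p := s/2 - 1) (Or.inl ht.ne')).const_mul
        (s/2)).mul_const A
      refine this.congr_deriv ?_
      rw [show s/2 - 1 - 1 = s/2 - 2 by ring]
      ring
  have hcongr : lap (fun Z => ‖Z - Y‖ ^ s * A) X
      = lap (fun Z => (‖Z - Y‖ ^ 2 : ℝ) ^ (s/2) * A) X := by
    apply lap_congr
    filter_upwards [(isOpen_compl_singleton).mem_nhds hX] with Z (hZ : Z ≠ Y)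
    rw [← Real.rpow_natCast ‖Z - Y‖ 2, ← Real.rpow_mul (norm_nonneg _),
      show ((2:ℕ):ℝ) * (s/2) = s by push_cast; ring]
  have e1 : (‖X - Y‖^2 : ℝ) ^ (s/2 - 1) = ‖X - Y‖ ^ (s - 2) := by
    rw [← Real.rpow_natCast ‖X - Y‖ 2, ← Real.rpow_mul (norm_nonneg _),
      show ((2:ℕ):ℝ) * (s/2 - 1) = s - 2 by push_cast; ring]
  have e2 : (‖X - Y‖^2 : ℝ) * (‖X - Y‖^2 : ℝ) ^ (s/2 - 2) = ‖X - Y‖ ^ (s - 2) := by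
    rw [← Real.rpow_natCast ‖X - Y‖ 2, ← Real.rpow_mul (norm_nonneg _),
      show ((2:ℕ):ℝ) * (s/2 - 2) = s - 4 by push_cast; ring,
      ← Real.rpow_add hr, show ((2:ℕ):ℝ) + (s - 4) = s - 2 by push_cast; ring]
  rw [hcongr, key, show (4:ℝ) * ‖X - Y‖ ^ 2 * (s/2 * (s/2 - 1) * (‖X - Y‖^2) ^ (s/2 - 2) * A)
      = 4 * (s/2 * (s/2 - 1)) * ((‖X - Y‖^2 : ℝ) * (‖X - Y‖^2 : ℝ) ^ (s/2 - 2)) * A by ring,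
    e2, e1]
  ring

lemma lap_rpow_log {n : ℕ} (Y : Euc n) (s c A : ℝ) (X : Euc n) (hX : X ≠ Y) :
    lap (fun Z => ‖Z - Y‖ ^ s * (Real.log ‖Z - Y‖ + c) * A) X
      = (s * (s + n - 2) * ‖X - Y‖ ^ (s - 2) * (Real.log ‖X - Y‖ + c)
          + (2 * s + n - 2) * ‖X - Y‖ ^ (s - 2)) * A := by
  have hr : (0:ℝ) < ‖X - Y‖ := by
    simpa [sub_eq_zero] using norm_pos_iff.2 (sub_ne_zero.2 hX)
  set a := s / 2 with ha
  set g : ℝ → ℝ := fun t => t ^ a * (1/2 * Real.log t + c) * A with hg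
  set g' : ℝ → ℝ := fun t => (a * t ^ (a-1) * (1/2 * Real.log t + c) + 1/2 * t ^ (a-1)) * A
    with hg'
  set g'' : ℝ → ℝ := fun t =>
    (a * (a-1) * t ^ (a-2) * (1/2 * Real.log t + c) + (a - 1/2) * t ^ (a-2)) * A with hg''
  have hlog : ∀ t : ℝ, 0 < t → HasDerivAt (fun t => 1/2 * Real.log t + c) (1/2 * t⁻¹) t :=
    fun t ht => ((Real.hasDerivAt_log ht.ne').const_mul (1/2)).add_const c
  have h1 : ∀ t : ℝ, 0 < t → HasDerivAt g (g' t) t := by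
    intro t ht
    have := ((Real.hasDerivAt_rpow_const (p := a) (Or.inl ht.ne')).mul
      (hlog t ht)).mul_const A
    refine this.congr_deriv ?_
    simp only [hg']
    rw [Real.rpow_sub_one ht.ne']
    field_simp
  have h2 : ∀ t : ℝ, 0 < t → HasDerivAt g' (g'' t) t := by
    intro t ht
    have hp1 : HasDerivAt (fun t : ℝ => a * t ^ (a-1)) (a * ((a-1) * t ^ (a-1-1))) t :=
      (Real.hasDerivAt_rpow_const (p := a-1) (Or.inl ht.ne')).const_mul a
    have hp2 : HasDerivAt (fun t : ℝ => 1/2 * t ^ (a-1)) (1/2 * ((a-1) * t ^ (a-1-1))) t :=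
      (Real.hasDerivAt_rpow_const (p := a-1) (Or.inl ht.ne')).const_mul (1/2)
    have := ((hp1.mul (hlog t ht)).add hp2).mul_const A
    have ee : t ^ (a-1) * t⁻¹ = t ^ (a-2) := by
      rw [show a - 1 = a - 2 + 1 by ring, Real.rpow_add_one ht.ne']
      field_simp
    refine this.congr_deriv ?_
    simp only [hg'']
    rw [show a - 1 - 1 = a - 2 by ring,
      show a * t ^ (a-1) * (1/2 * t⁻¹) = a * (1/2) * (t ^ (a-1) * t⁻¹) by ring, ee]
    ring
  have key := lap_radial Y g g' g'' h1 h2 X hX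
  have hcongr : lap (fun Z => ‖Z - Y‖ ^ s * (Real.log ‖Z - Y‖ + c) * A) X
      = lap (fun Z => g (‖Z - Y‖ ^ 2)) X := by
    apply lap_congr
    filter_upwards [(isOpen_compl_singleton).mem_nhds hX] with Z (hZ : Z ≠ Y)
    simp only [hg]
    rw [← Real.rpow_natCast ‖Z - Y‖ 2, ← Real.rpow_mul (norm_nonneg _),
      show ((2:ℕ):ℝ) * (s/2) = s by push_cast; ring, Real.rpow_natCast,
      Real.log_pow]
    push_cast
    ring_nf
  have e1 : (‖X - Y‖^2 : ℝ) ^ (a - 1) = ‖X - Y‖ ^ (s - 2) := by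
    rw [← Real.rpow_natCast ‖X - Y‖ 2, ← Real.rpow_mul (norm_nonneg _),
      show ((2:ℕ):ℝ) * (a - 1) = s - 2 by rw [ha]; push_cast; ring]
  have e2 : (‖X - Y‖^2 : ℝ) * (‖X - Y‖^2 : ℝ) ^ (a - 2) = ‖X - Y‖ ^ (s - 2) := by
    rw [← Real.rpow_natCast ‖X - Y‖ 2, ← Real.rpow_mul (norm_nonneg _),
      show ((2:ℕ):ℝ) * (a - 2) = s - 4 by rw [ha]; push_cast; ring,
      ← Real.rpow_add hr, show ((2:ℕ):ℝ) + (s - 4) = s - 2 by push_cast; ring]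
  have elog : (1/2 : ℝ) * Real.log (‖X - Y‖^2) + c = Real.log ‖X - Y‖ + c := by
    rw [Real.log_pow]; push_cast; ring
  rw [hcongr, key]
  simp only [hg', hg'']
  rw [show (4:ℝ) * ‖X - Y‖ ^ 2 *
      ((a * (a-1) * (‖X - Y‖^2) ^ (a-2) * (1/2 * Real.log (‖X - Y‖^2) + c)
        + (a - 1/2) * (‖X - Y‖^2) ^ (a-2)) * A)
      = (4 * (a * (a-1)) * ((‖X - Y‖^2 : ℝ) * (‖X - Y‖^2) ^ (a-2))
          * (1/2 * Real.log (‖X - Y‖^2) + c)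
        + 4 * (a - 1/2) * ((‖X - Y‖^2 : ℝ) * (‖X - Y‖^2) ^ (a-2))) * A by ring,
    e2, e1, elog, ha]
  ring


lemma lap_congr' {n : ℕ} {u v : Euc n → ℝ} {X : Euc n} (h : ∀ Z, u Z = v Z) :
    lap u X = lap v X := lap_congr (Filter.Eventually.of_forall h)

lemma lap_iter_congr {n : ℕ} {U : Set (Euc n)} (hU : IsOpen U) :
    ∀ (k : ℕ) {u v : Euc n → ℝ}, (∀ Z ∈ U, u Z = v Z) →
      ∀ X ∈ U, lap^[k] u X = lap^[k] v X := by
  intro k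
  induction k with
  | zero => intro u v h X hX; exact h X hX
  | succ j ih =>
    intro u v h X hX
    rw [Function.iterate_succ_apply, Function.iterate_succ_apply]
    refine ih (fun Z hZ => ?_) X hX
    exact lap_congr (by filter_upwards [hU.mem_nhds hZ] with W hW using h W hW)

lemma sphereArea_pos {n : ℕ} (hn : 3 ≤ n) : 0 < sphereArea n := by
  have h1 : (0:ℝ) < (n:ℝ)/2 := by
    have : (3:ℝ) ≤ n := by exact_mod_cast hn
    linarith
  have := Real.Gamma_pos_of_pos h1
  have hpi := Real.pi_pos
  unfold sphereArea
  positivity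

lemma gamK_ne_zero {n k : ℕ} (hn : 3 ≤ n) (hk : 1 ≤ k) (h : Odd n ∨ 2*k + 2 < n) :
    gamK n k ≠ 0 := by
  unfold gamK deltaS
  have hk' : (1:ℝ) ≤ (k:ℝ) := by exact_mod_cast hk
  apply mul_ne_zero
  · rcases h with h | h
    · intro he
      have hnk : n = 2*k + 2 := by
        have : (n:ℝ) = 2*(k:ℝ) + 2 := by linarith
        exact_mod_cast this
      rw [hnk] at h
      exact (by simp [Nat.odd_iff, Nat.add_mul_mod_self_left] : ¬ Odd (2*k+2)) h
    · have h' : 2*(k:ℝ) + 2 < (n:ℝ) := by exact_mod_cast h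
      intro he; linarith
  · intro he; linarith

lemma deltaS_ne_zero {n t : ℕ} (hn : 3 ≤ n) (ht : 1 ≤ t) :
    deltaS n (2*(t:ℝ)) ≠ 0 := by
  unfold deltaS
  have ht' : (1:ℝ) ≤ (t:ℝ) := by exact_mod_cast ht
  have hn' : (3:ℝ) ≤ (n:ℝ) := by exact_mod_cast hn
  apply mul_ne_zero <;> intro he <;> linarith

lemma lap_polyK_one {n : ℕ} (Y X : Euc n) (hX : X ≠ Y) :
    lap (fun Z => polyK n 1 Z Y) X = 0 := by
  have h : lap (fun Z => polyK n 1 Z Y) X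
      = lap (fun Z => ‖Z - Y‖ ^ (2 - (n:ℝ)) * (((n:ℝ) - 2) * sphereArea n)⁻¹) X := by
    apply lap_congr'
    intro Z
    rw [polyK, if_pos rfl, div_eq_mul_inv]
  rw [h, lap_rpow Y _ _ X hX]
  ring

lemma lap_polyK_succ {n : ℕ} (m : ℕ) (hn : 3 ≤ n) (hm : 2 ≤ m) (Y X : Euc n)
    (hX : X ≠ Y) :
    lap (fun Z => polyK n m Z Y) X = polyK n (m-1) X Y := by
  have hm1 : m ≠ 1 := by omega
  have hn2 : ((n:ℝ) - 2) ≠ 0 := by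
    have : (3:ℝ) ≤ (n:ℝ) := by exact_mod_cast hn
    intro he; linarith
  have hω : sphereArea n ≠ 0 := (sphereArea_pos hn).ne'
  by_cases hP : Odd n ∨ 2 * m ≤ n - 2
  · -- polynomial branch
    have hbody : ∀ Z : Euc n, polyK n m Z Y =
        ‖Z - Y‖ ^ (2*(m:ℝ) - (n:ℝ)) *
          (((n:ℝ)-2) * sphereArea n * ∏ k ∈ Finset.Icc 1 (m-1), gamK n k)⁻¹ := by
      intro Z; rw [polyK, if_neg hm1, if_pos hP, div_eq_mul_inv]
    rw [lap_congr' hbody, lap_rpow Y _ _ X hX]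
    have hγfac : ∀ k ∈ Finset.Icc 1 (m-1), gamK n k ≠ 0 := by
      intro k hk
      obtain ⟨hk1, hk2⟩ := Finset.mem_Icc.1 hk
      refine gamK_ne_zero hn hk1 (hP.imp id (fun h => by omega))
    have hγ : gamK n (m-1) ≠ 0 := hγfac _ (Finset.mem_Icc.2 ⟨by omega, le_refl _⟩)
    have hsplit : (∏ k ∈ Finset.Icc 1 (m-1), gamK n k)
        = (∏ k ∈ Finset.Icc 1 (m-2), gamK n k) * gamK n (m-1) := by
      have e : m - 1 = (m-2)+1 := by omega
      rw [e, Finset.prod_Icc_succ_top (by omega), ← e]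
    have hP' : (∏ k ∈ Finset.Icc 1 (m-2), gamK n k) ≠ 0 :=
      Finset.prod_ne_zero_iff.2 (fun k hk =>
        hγfac k (Finset.mem_Icc.2 ⟨(Finset.mem_Icc.1 hk).1, by
          have := (Finset.mem_Icc.1 hk).2; omega⟩))
    rw [hsplit]
    have hcast : ((m-1 : ℕ):ℝ) = (m:ℝ) - 1 := by
      rw [Nat.cast_sub (by omega), Nat.cast_one]
    by_cases hm2 : m = 2
    · subst hm2
      rw [polyK, if_pos rfl]
      have hγ1 : gamK n 1 ≠ 0 := by simpa using hγ
      norm_num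
      rw [show (4:ℝ) - (n:ℝ) - 2 = 2 - (n:ℝ) by ring]
      field_simp [hγ1]
      simp only [gamK, deltaS]
      push_cast
      ring
    · rw [polyK, if_neg (by omega), if_pos (hP.imp id (fun h => by omega)),
        show m - 1 - 1 = m - 2 by omega,
        show 2*((m-1 : ℕ):ℝ) - (n:ℝ) = 2*(m:ℝ) - (n:ℝ) - 2 by rw [hcast]; ring]
      field_simp [hγ, hP']
      simp only [gamK, deltaS]
      rw [hcast]
      ring
  · -- logarithmic branch
    have heven : Even n := Nat.not_odd_iff_even.1 (by tauto)
    obtain ⟨k0, hk0⟩ := heven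
    have hnm : ¬ (2*m ≤ n - 2) := by tauto
    have hge : n ≤ 2*m := by omega
    have hdiv : n / 2 = k0 := by omega
    have hbody : ∀ Z : Euc n, polyK n m Z Y =
        ‖Z - Y‖ ^ (2*(m:ℝ) - (n:ℝ)) * (Real.log ‖Z - Y‖ + polyC n m) *
          (((n:ℝ)-2)^2 * sphereArea n * (∏ k ∈ Finset.Icc 1 (n/2-2), gamK n k) *
            ∏ t ∈ Finset.Icc 1 (m - n/2), deltaS n (2*(t:ℝ)))⁻¹ := by
      intro Z; rw [polyK, if_neg hm1, if_neg hP, div_eq_mul_inv]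
    rw [lap_congr' hbody, lap_rpow_log Y _ _ _ X hX]
    have hPγ : (∏ k ∈ Finset.Icc 1 (n/2-2), gamK n k) ≠ 0 :=
      Finset.prod_ne_zero_iff.2 (fun k hk => by
        obtain ⟨h1, h2⟩ := Finset.mem_Icc.1 hk
        exact gamK_ne_zero hn h1 (Or.inr (by omega)))
    by_cases ht0 : m - n/2 = 0
    · -- m = n/2
      have h2m : 2*m = n := by omega
      have hs0 : 2*(m:ℝ) - (n:ℝ) = 0 := by
        have : ((2*m : ℕ):ℝ) = ((n:ℕ):ℝ) := Nat.cast_inj.mpr h2m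
        push_cast at this; linarith
      rw [ht0, show Finset.Icc 1 0 = (∅ : Finset ℕ) from Finset.Icc_eq_empty (by omega),
        Finset.prod_empty, hs0]
      by_cases hm2 : m - 1 = 1
      · have hn4 : n = 4 := by omega
        subst hn4
        rw [polyK, if_pos hm2, show (2:ℝ) - ((4:ℕ):ℝ) = 0 - 2 by norm_num]
        rw [show (4:ℕ)/2 - 2 = 0 by norm_num,
          show Finset.Icc 1 0 = (∅ : Finset ℕ) from Finset.Icc_eq_empty (by omega),
          Finset.prod_empty] at *
        field_simp
        ring
      · rw [polyK, if_neg hm2, if_pos (Or.inr (by omega)),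
          show m - 1 - 1 = n/2 - 2 by omega,
          show 2*((m-1 : ℕ):ℝ) - (n:ℝ) = 0 - 2 by
            rw [Nat.cast_sub (by omega), Nat.cast_one]; linarith]
        field_simp [hPγ]
        ring
    · -- m > n/2
      have ht1 : 1 ≤ m - n/2 := by omega
      have hm3 : 3 ≤ m := by omega
      have h2mt : 2*m = n + 2*(m - n/2) := by omega
      have hs : 2*(m:ℝ) - (n:ℝ) = 2*((m - n/2 : ℕ):ℝ) := by
        have : ((2*m : ℕ):ℝ) = ((n + 2*(m - n/2) : ℕ):ℝ) := Nat.cast_inj.mpr h2mt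
        push_cast at this; linarith
      have htc : (1:ℝ) ≤ ((m - n/2 : ℕ):ℝ) := by exact_mod_cast ht1
      have hnc : (3:ℝ) ≤ (n:ℝ) := by exact_mod_cast hn
      have hδ : deltaS n (2*((m - n/2 : ℕ):ℝ)) ≠ 0 := deltaS_ne_zero hn ht1
      have hPδ : (∏ t ∈ Finset.Icc 1 (m - n/2 - 1), deltaS n (2*(t:ℝ))) ≠ 0 :=
        Finset.prod_ne_zero_iff.2 (fun t ht => deltaS_ne_zero hn (Finset.mem_Icc.1 ht).1)
      have hsplitδ : (∏ t ∈ Finset.Icc 1 (m - n/2), deltaS n (2*(t:ℝ)))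
          = (∏ t ∈ Finset.Icc 1 (m - n/2 - 1), deltaS n (2*(t:ℝ)))
            * deltaS n (2*((m - n/2 : ℕ):ℝ)) := by
        have e : m - n/2 = (m - n/2 - 1) + 1 := by omega
        rw [e, Finset.prod_Icc_succ_top (by omega), ← e]
      have hc : polyC n m = polyC n (m-1)
          - (1/(2*((m - n/2 : ℕ):ℝ)) + 1/(2*((m - n/2 : ℕ):ℝ) + (n:ℝ) - 2)) := by
        simp only [polyC]
        rw [show m - n/2 = (m - n/2 - 1) + 1 by omega, Finset.sum_Icc_succ_top (by omega),
          show (m - n/2 - 1) + 1 = m - n/2 by omega, show m - 1 - n/2 = m - n/2 - 1 by omega]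
        ring
      rw [hsplitδ, hc, hs]
      rw [polyK, if_neg (by omega), if_neg (by
          rintro (h | h)
          · exact (Nat.not_odd_iff_even.2 ⟨k0, hk0⟩) h
          · omega),
        show m - 1 - n/2 = m - n/2 - 1 by omega,
        show 2*((m-1 : ℕ):ℝ) - (n:ℝ) = 2*((m - n/2 : ℕ):ℝ) - 2 by
          rw [Nat.cast_sub (by omega), Nat.cast_one]; linarith]
      have h2t0 : (2*((m - n/2 : ℕ):ℝ)) ≠ 0 := by linarith
      have h2tn : (2*((m - n/2 : ℕ):ℝ) + (n:ℝ) - 2) ≠ 0 := by linarith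
      simp only [deltaS] at hδ hPδ ⊢
      field_simp [hδ, hPδ, hPγ, h2t0, h2tn]
      ring

lemma contDiffAt_polyK (n m : ℕ) (Y X : Euc n) (hX : X ≠ Y) :
    ContDiffAt ℝ (⊤ : ℕ∞) (fun Z => polyK n m Z Y) X := by
  have hne : X - Y ≠ 0 := sub_ne_zero.2 hX
  have hnorm : ContDiffAt ℝ (⊤ : ℕ∞) (fun Z : Euc n => ‖Z - Y‖) X := by
    refine ContDiffAt.norm ℝ ?_ hne
    exact contDiffAt_id.sub contDiffAt_const
  have hr0 : ‖X - Y‖ ≠ 0 := norm_ne_zero_iff.2 hne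
  unfold polyK
  split_ifs with h1 h2
  · exact (hnorm.rpow_const_of_ne hr0).div_const _
  · exact (hnorm.rpow_const_of_ne hr0).div_const _
  · exact ((hnorm.rpow_const_of_ne hr0).mul
      ((hnorm.log hr0).add contDiffAt_const)).div_const _

end AuxPolyK

/-- For every `m ≥ 1`, the kernel `𝒦_m(·, Y)` is smooth away from
`Y` and polyharmonic of order `m` there: `Δ_X^m 𝒦_m(X, Y) = 0` for `X ≠ Y`. -/
theorem polyK_smooth_and_polyharmonic (n m : ℕ) (hn : 3 ≤ n) (hm : 1 ≤ m) (Y : Euc n) :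
    ContDiffOn ℝ (⊤ : ℕ∞) (fun X => polyK n m X Y) ({Y}ᶜ : Set (Euc n)) ∧
    ∀ X : Euc n, X ≠ Y → (lap^[m] (fun Z => polyK n m Z Y)) X = 0 := by
  constructor
  · intro X hX
    exact (contDiffAt_polyK n m Y X hX).contDiffWithinAt
  · have main : ∀ m, 1 ≤ m → ∀ X : Euc n, X ≠ Y →
        (lap^[m] (fun Z => polyK n m Z Y)) X = 0 := by
      intro m
      induction m with
      | zero => omega
      | succ k ih =>
        intro _ X hX
        by_cases hk0 : k = 0
        · subst hk0
          rw [Function.iterate_one]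
          exact lap_polyK_one Y X hX
        · have hk1 : 1 ≤ k := by omega
          rw [Function.iterate_succ_apply]
          have hstep : ∀ W ∈ ({Y}ᶜ : Set (Euc n)), lap (fun Z => polyK n (k+1) Z Y) W
              = (fun Z => polyK n k Z Y) W := by
            intro W hW
            have := lap_polyK_succ (k+1) hn (by omega) Y W hW
            simpa using this
          rw [lap_iter_congr isOpen_compl_singleton k hstep X hX]
          exact ih hk1 X hX
    exact main m hm
end

section
/- Let n ≥ 3, let D ⊂ ℝ^n be a bounded Lipschitz domain, let j ≥ 1 and 1 ≤ p ≤ ∞. There exists a constant C, depending only on j, n, p and D, such that for every f ∈ L^p(∂D, σ), ‖𝓜_j f‖_{L^p(D)} ≤ C·‖f‖_{L^p(∂D,σ)}, where the L^p(D) norm is taken with respect to Lebesgue measure on D. -/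
open MeasureTheory Filter Metric Set Topology
open scoped ENNReal NNReal RealInnerProductSpace

/-!
On `D̄ × D̄` the kernel obeys `|𝒦_j(X, Q)| ≲ |X - Q|^(2-n)`: for `j ≥ 2` the extra factor
`|X - Q|^(2j-2)`, with or without `log |X - Q| + c_j`, is bounded on a bounded set.
Lipschitz graph charts make `σ` upper Ahlfors regular of dimension `n - 1`, and Lebesgue measure
is `n`-regular, so summing over dyadic shells bounds `∫ |X - Q|^(2-n)` uniformly in either
variable, because `(2 - n) + (n - 1) > 0`. Schur's test with these two uniform bounds gives the
`L^p` estimate for every `1 ≤ p ≤ ∞`.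
-/

namespace MeasureTheory

variable {α β : Type*} [MeasurableSpace α] [MeasurableSpace β] {μ : Measure α} {ν : Measure β}

theorem lintegral_mul_rpow_le {k h : β → ℝ≥0∞} (hk : AEMeasurable k ν) (hh : AEMeasurable h ν)
    {q : ℝ} (hq : 1 ≤ q) :
    (∫⁻ y, k y * h y ∂ν) ^ q ≤ (∫⁻ y, k y ∂ν) ^ (q - 1) * ∫⁻ y, k y * h y ^ q ∂ν := by
  have hq0 : 0 < q := by linarith
  have hsplit : ∀ y, k y * h y = k y ^ (1 - q⁻¹) * (k y * h y ^ q) ^ q⁻¹ := fun y => by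
    rw [ENNReal.mul_rpow_of_nonneg _ _ (by positivity), ← ENNReal.rpow_mul,
      mul_inv_cancel₀ hq0.ne', ENNReal.rpow_one, ← mul_assoc,
      ← ENNReal.rpow_add_of_nonneg _ _ (sub_nonneg.2 (inv_le_one_of_one_le₀ hq)) (by positivity),
      sub_add_cancel, ENNReal.rpow_one]
  have holder : ∫⁻ y, k y * h y ∂ν ≤
      (∫⁻ y, k y ∂ν) ^ (1 - q⁻¹) * (∫⁻ y, k y * h y ^ q ∂ν) ^ q⁻¹ := by
    simpa only [← hsplit] using ENNReal.lintegral_mul_norm_pow_le (g := fun y => k y * h y ^ q)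
      hk (hk.mul (hh.pow_const q)) (sub_nonneg.2 (inv_le_one_of_one_le₀ hq))
      (inv_nonneg.2 hq0.le) (sub_add_cancel 1 q⁻¹)
  calc (∫⁻ y, k y * h y ∂ν) ^ q
      ≤ ((∫⁻ y, k y ∂ν) ^ (1 - q⁻¹) * (∫⁻ y, k y * h y ^ q ∂ν) ^ q⁻¹) ^ q :=
        ENNReal.rpow_le_rpow holder hq0.le
    _ = (∫⁻ y, k y ∂ν) ^ (q - 1) * ∫⁻ y, k y * h y ^ q ∂ν := by
        rw [ENNReal.mul_rpow_of_nonneg _ _ hq0.le, ← ENNReal.rpow_mul, ← ENNReal.rpow_mul,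
          inv_mul_cancel₀ hq0.ne', ENNReal.rpow_one, sub_mul, one_mul, inv_mul_cancel₀ hq0.ne']

theorem lintegral_rpow_lintegral_mul_le [SFinite μ] [SFinite ν] {k : α → β → ℝ≥0∞}
    (hk : Measurable (Function.uncurry k)) {h : β → ℝ≥0∞} (hh : Measurable h) {A B : ℝ≥0∞}
    (hA : ∀ᵐ x ∂μ, ∫⁻ y, k x y ∂ν ≤ A) (hB : ∀ᵐ y ∂ν, ∫⁻ x, k x y ∂μ ≤ B) {q : ℝ} (hq : 1 ≤ q) :
    ∫⁻ x, (∫⁻ y, k x y * h y ∂ν) ^ q ∂μ ≤ A ^ (q - 1) * B * ∫⁻ y, h y ^ q ∂ν := by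
  have hkq : Measurable (Function.uncurry fun x y => k x y * h y ^ q) :=
    hk.mul ((hh.pow_const q).comp measurable_snd)
  calc ∫⁻ x, (∫⁻ y, k x y * h y ∂ν) ^ q ∂μ
      ≤ ∫⁻ x, A ^ (q - 1) * ∫⁻ y, k x y * h y ^ q ∂ν ∂μ := by
        refine lintegral_mono_ae (hA.mono fun x hx => ?_)
        exact (lintegral_mul_rpow_le (hk.of_uncurry_left).aemeasurable hh.aemeasurable hq).trans
          (by gcongr)
    _ = A ^ (q - 1) * ∫⁻ y, (∫⁻ x, k x y ∂μ) * h y ^ q ∂ν := by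
        rw [lintegral_const_mul _ hkq.lintegral_prod_right, lintegral_lintegral_swap
          hkq.aemeasurable]
        simp_rw [lintegral_mul_const _ hk.of_uncurry_right]
    _ ≤ A ^ (q - 1) * B * ∫⁻ y, h y ^ q ∂ν := by
        rw [mul_assoc, ← lintegral_const_mul _ (hh.pow_const q)]
        gcongr A ^ (q - 1) * ?_
        exact lintegral_mono_ae (hB.mono fun y hy => by gcongr)

variable {K : α → β → ℝ} {A B : ℝ≥0∞}

theorem eLpNorm_top_integral_kernel_mul_le (hK : Measurable (Function.uncurry K))
    (hA : ∀ᵐ x ∂μ, ∫⁻ y, ‖K x y‖ₑ ∂ν ≤ A) (f : β → ℝ) :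
    eLpNorm (fun x => ∫ y, K x y * f y ∂ν) ∞ μ ≤ A * eLpNorm f ∞ ν := by
  rw [eLpNorm_exponent_top, eLpNorm_exponent_top]
  refine essSup_le_of_ae_le _ (hA.mono fun x hx => ?_)
  calc ‖∫ y, K x y * f y ∂ν‖ₑ ≤ ∫⁻ y, ‖K x y‖ₑ * ‖f y‖ₑ ∂ν := by
        simpa only [enorm_mul] using enorm_integral_le_lintegral_enorm (fun y => K x y * f y)
    _ ≤ ∫⁻ y, ‖K x y‖ₑ * eLpNormEssSup f ν ∂ν :=
        lintegral_mono_ae (ae_le_eLpNormEssSup.mono fun y hy => by gcongr)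
    _ = (∫⁻ y, ‖K x y‖ₑ ∂ν) * eLpNormEssSup f ν :=
        lintegral_mul_const _ hK.of_uncurry_left.enorm
    _ ≤ A * eLpNormEssSup f ν := by gcongr

theorem eLpNorm_integral_kernel_mul_le_of_ne_top [SFinite μ] [SFinite ν]
    (hK : Measurable (Function.uncurry K)) (hA : ∀ᵐ x ∂μ, ∫⁻ y, ‖K x y‖ₑ ∂ν ≤ A)
    (hB : ∀ᵐ y ∂ν, ∫⁻ x, ‖K x y‖ₑ ∂μ ≤ B) {p : ℝ≥0∞} (hp : 1 ≤ p) (hp_top : p ≠ ∞)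
    {f : β → ℝ} (hf : Measurable f) :
    eLpNorm (fun x => ∫ y, K x y * f y ∂ν) p μ ≤
      A ^ (1 - p⁻¹).toReal * B ^ p⁻¹.toReal * eLpNorm f p ν := by
  rw [ENNReal.toReal_sub_of_le (ENNReal.inv_le_one.2 hp) ENNReal.one_ne_top, ENNReal.toReal_one,
    ENNReal.toReal_inv]
  have hq : 1 ≤ p.toReal := by
    simpa using ENNReal.toReal_mono hp_top hp
  have hq0 : 0 < p.toReal := by linarith
  rw [eLpNorm_eq_lintegral_rpow_enorm_toReal (by positivity) hp_top,
    eLpNorm_eq_lintegral_rpow_enorm_toReal (by positivity) hp_top]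
  calc (∫⁻ x, ‖∫ y, K x y * f y ∂ν‖ₑ ^ p.toReal ∂μ) ^ (1 / p.toReal)
      ≤ (∫⁻ x, (∫⁻ y, ‖K x y‖ₑ * ‖f y‖ₑ ∂ν) ^ p.toReal ∂μ) ^ (1 / p.toReal) := by
        gcongr with x
        simpa only [enorm_mul] using enorm_integral_le_lintegral_enorm (fun y => K x y * f y)
    _ ≤ (A ^ (p.toReal - 1) * B * ∫⁻ y, ‖f y‖ₑ ^ p.toReal ∂ν) ^ (1 / p.toReal) := by
        gcongr
        exact lintegral_rpow_lintegral_mul_le hK.enorm hf.enorm hA hB hq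
    _ = A ^ (1 - p.toReal⁻¹) * B ^ p.toReal⁻¹ *
          (∫⁻ y, ‖f y‖ₑ ^ p.toReal ∂ν) ^ (1 / p.toReal) := by
        rw [ENNReal.mul_rpow_of_nonneg _ _ (by positivity),
          ENNReal.mul_rpow_of_nonneg _ _ (by positivity), ← ENNReal.rpow_mul, one_div]
        congr 3
        field_simp

/-- Schur's test. -/
theorem eLpNorm_integral_kernel_mul_le [SFinite μ] [SFinite ν]
    (hK : Measurable (Function.uncurry K)) (hA : ∀ᵐ x ∂μ, ∫⁻ y, ‖K x y‖ₑ ∂ν ≤ A)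
    (hB : ∀ᵐ y ∂ν, ∫⁻ x, ‖K x y‖ₑ ∂μ ≤ B) {p : ℝ≥0∞} (hp : 1 ≤ p)
    {f : β → ℝ} (hf : AEStronglyMeasurable f ν) :
    eLpNorm (fun x => ∫ y, K x y * f y ∂ν) p μ ≤
      A ^ (1 - p⁻¹).toReal * B ^ p⁻¹.toReal * eLpNorm f p ν := by
  have hT : (fun x => ∫ y, K x y * f y ∂ν) = fun x => ∫ y, K x y * hf.mk f y ∂ν :=
    funext fun x => integral_congr_ae (hf.ae_eq_mk.mono fun y hy => by simp only [hy])
  rw [hT, eLpNorm_congr_ae hf.ae_eq_mk]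
  rcases eq_or_ne p ∞ with rfl | hp_top
  · simpa using eLpNorm_top_integral_kernel_mul_le hK hA _
  · exact eLpNorm_integral_kernel_mul_le_of_ne_top hK hA hB hp hp_top
      hf.stronglyMeasurable_mk.measurable

end MeasureTheory

theorem rpow_mul_rpow_dyadic_eq_geometric {R : ℝ} (hR : 0 < R) (a d : ℝ) (k : ℕ) :
    (R / 2 ^ (k + 1)) ^ a * (2 * (R / 2 ^ k)) ^ d =
      2 ^ (d - a) * R ^ (a + d) * ((2 ^ (a + d))⁻¹) ^ k := by
  have hρ : 0 < R / 2 ^ k := by positivity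
  have hhalf : R / 2 ^ (k + 1) = R / 2 ^ k / 2 := by rw [pow_succ, div_div]
  have hscale : (R / 2 ^ k) ^ (a + d) = R ^ (a + d) * ((2 ^ (a + d))⁻¹) ^ k := by
    rw [Real.div_rpow hR.le (by positivity), inv_pow, Real.rpow_pow_comm zero_le_two,
      div_eq_mul_inv]
  rw [hhalf, Real.div_rpow hρ.le zero_le_two, Real.mul_rpow zero_le_two hρ.le,
    Real.rpow_sub zero_lt_two, mul_assoc (_ / _), ← hscale, Real.rpow_add hρ]
  ring

theorem ofReal_dist_rpow_le_tsum_indicator_ball {X : Type*} [PseudoMetricSpace X] {x y : X}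
    {a R : ℝ} (ha : a < 0) (hR : 0 < R) (hy : dist x y ≤ R) :
    ENNReal.ofReal (dist x y ^ a) ≤
      ∑' k : ℕ, (ball x (2 * (R / 2 ^ k))).indicator
        (fun _ => ENNReal.ofReal ((R / 2 ^ (k + 1)) ^ a)) y := by
  rcases (dist_nonneg (x := x) (y := y)).eq_or_lt with h0 | h0
  · simp [← h0, Real.zero_rpow ha.ne]
  obtain ⟨k, hk, hk'⟩ := exists_nat_pow_near (one_le_div h0 |>.2 hy) one_lt_two
  refine le_trans ?_ (ENNReal.le_tsum k)
  rw [indicator_of_mem]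
  · gcongr ENNReal.ofReal ?_
    refine Real.rpow_le_rpow_of_nonpos (by positivity) ?_ ha.le
    rw [div_lt_iff₀ (by positivity)] at hk'
    rw [div_le_iff₀ (by positivity)]
    linarith
  · rw [mem_ball_comm, mem_ball]
    have : dist x y ≤ R / 2 ^ k := by
      rw [le_div_iff₀' (by positivity)]
      exact (le_div_iff₀ h0).1 hk
    linarith [div_pos hR (pow_pos (two_pos : (0 : ℝ) < 2) k)]

section UpperAhlforsRegular

variable {X : Type*} [PseudoMetricSpace X] [MeasurableSpace X]

def IsUpperAhlforsRegular (μ : Measure X) (d : ℝ) : Prop :=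
  ∃ C : ℝ≥0∞, C ≠ ∞ ∧ ∀ (x : X) (r : ℝ), 0 < r → μ (ball x r) ≤ C * ENNReal.ofReal (r ^ d)

theorem IsUpperAhlforsRegular.mono {μ ν : Measure X} {d : ℝ} (hν : IsUpperAhlforsRegular ν d)
    (hμν : μ ≤ ν) : IsUpperAhlforsRegular μ d :=
  let ⟨C, hC, hball⟩ := hν
  ⟨C, hC, fun x r hr => (Measure.le_iff'.1 hμν _).trans (hball x r hr)⟩

theorem isUpperAhlforsRegular_of_measure_ball_le {μ : Measure X} [IsFiniteMeasure μ] {d : ℝ}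
    (hd : 0 ≤ d) {C : ℝ≥0∞} (hC : C ≠ ∞) {δ : ℝ} (hδ : 0 < δ)
    (hball : ∀ (x : X) (r : ℝ), 0 < r → r ≤ δ → μ (ball x r) ≤ C * ENNReal.ofReal (r ^ d)) :
    IsUpperAhlforsRegular μ d := by
  have hδd : ENNReal.ofReal (δ ^ d) ≠ 0 := by
    simpa using Real.rpow_pos_of_pos hδ d
  refine ⟨C + μ univ / ENNReal.ofReal (δ ^ d),
    ENNReal.add_ne_top.2 ⟨hC, (ENNReal.div_lt_top (measure_ne_top μ _) hδd).ne⟩, fun x r hr => ?_⟩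
  rcases le_or_gt r δ with hrδ | hδr
  · exact (hball x r hr hrδ).trans (by gcongr; exact le_self_add)
  · calc μ (ball x r) ≤ μ univ := measure_mono (subset_univ _)
      _ = μ univ / ENNReal.ofReal (δ ^ d) * ENNReal.ofReal (δ ^ d) :=
        (ENNReal.div_mul_cancel hδd ENNReal.ofReal_ne_top).symm
      _ ≤ (C + μ univ / ENNReal.ofReal (δ ^ d)) * ENNReal.ofReal (r ^ d) := by
        gcongr
        exact le_add_self

theorem IsCompact.isFiniteMeasure_of_measure_ball_lt_top {μ : Measure X} {s : Set X}
    (hs : IsCompact s) (hμs : μ sᶜ = 0) {δ : ℝ} (hδ : 0 < δ) (hball : ∀ x ∈ s, μ (ball x δ) < ∞) :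
    IsFiniteMeasure μ := by
  have hμs_fin : μ s < ∞ := hs.measure_lt_top_of_nhdsWithin fun x hx =>
    ⟨ball x δ, mem_nhdsWithin_of_mem_nhds (ball_mem_nhds x hδ), hball x hx⟩
  refine ⟨(measure_mono (union_compl_self s).ge).trans_lt ?_⟩
  exact (measure_union_le s sᶜ).trans_lt (by simpa [hμs] using hμs_fin)

theorem IsCompact.exists_measure_ball_le_of_local {μ : Measure X} {s : Set X} (hs : IsCompact s)
    (hμs : μ sᶜ = 0) {C : ℝ≥0∞} {d : ℝ}
    (hloc : ∀ x ∈ s, ∃ U, IsOpen U ∧ x ∈ U ∧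
      ∀ (y : X) (r : ℝ), 0 < r → μ (U ∩ ball y r) ≤ C * ENNReal.ofReal (r ^ d)) :
    ∃ δ > 0, ∀ (y : X) (r : ℝ), 0 < r → r ≤ δ → μ (ball y r) ≤ C * ENNReal.ofReal (r ^ d) := by
  choose! U hUo hxU hU using hloc
  obtain ⟨δ, hδ, hleb⟩ := lebesgue_number_lemma_of_metric (c := fun x : s => U x) hs
    (fun x => hUo x x.2) (fun x hx => mem_iUnion.2 ⟨⟨x, hx⟩, hxU x hx⟩)
  refine ⟨δ / 2, half_pos hδ, fun y r hr hrδ => ?_⟩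
  rcases (ball y r ∩ s).eq_empty_or_nonempty with hempty | ⟨z, hzy, hzs⟩
  · have : μ (ball y r) = 0 :=
      measure_mono_null (fun w hw hws => hempty.subset ⟨hw, hws⟩) hμs
    simp [this]
  · obtain ⟨i, hi⟩ := hleb z hzs
    have hsub : ball y r ⊆ U i :=
      (ball_subset_ball' (by linarith [mem_ball.1 hzy, dist_comm z y])).trans hi
    calc μ (ball y r) = μ (U i ∩ ball y r) := by rw [inter_eq_right.2 hsub]
      _ ≤ C * ENNReal.ofReal (r ^ d) := hU i i.2 y r hr

theorem IsUpperAhlforsRegular.exists_lintegral_dist_rpow_le [OpensMeasurableSpace X]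
    {μ : Measure X} {d : ℝ} (hμ : IsUpperAhlforsRegular μ d) {a : ℝ} (ha : a < 0)
    (had : 0 < a + d) {R : ℝ} (hR : 0 < R) :
    ∃ S : ℝ≥0∞, S ≠ ∞ ∧ ∀ x : X, (∀ᵐ y ∂μ, dist x y ≤ R) →
      ∫⁻ y, ENNReal.ofReal (dist x y ^ a) ∂μ ≤ S := by
  obtain ⟨C, hC, hball⟩ := hμ
  set q : ℝ := (2 ^ (a + d))⁻¹
  have hq : ENNReal.ofReal q < 1 := by
    rw [ENNReal.ofReal_lt_one]
    exact inv_lt_one_of_one_lt₀ (Real.one_lt_rpow one_lt_two had)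
  refine ⟨C * ENNReal.ofReal (2 ^ (d - a) * R ^ (a + d)) * (1 - ENNReal.ofReal q)⁻¹,
    by finiteness [(tsub_pos_of_lt hq).ne'], fun x hx => ?_⟩
  calc ∫⁻ y, ENNReal.ofReal (dist x y ^ a) ∂μ
      ≤ ∫⁻ y, ∑' k : ℕ, (ball x (2 * (R / 2 ^ k))).indicator
          (fun _ => ENNReal.ofReal ((R / 2 ^ (k + 1)) ^ a)) y ∂μ :=
        lintegral_mono_ae (hx.mono fun y => ofReal_dist_rpow_le_tsum_indicator_ball ha hR)
    _ = ∑' k : ℕ, ENNReal.ofReal ((R / 2 ^ (k + 1)) ^ a) * μ (ball x (2 * (R / 2 ^ k))) := by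
        rw [lintegral_tsum fun k => (measurable_const.indicator measurableSet_ball).aemeasurable]
        simp_rw [lintegral_indicator_const measurableSet_ball]
    _ ≤ ∑' k : ℕ, C * ENNReal.ofReal (2 ^ (d - a) * R ^ (a + d)) * ENNReal.ofReal q ^ k := by
        refine ENNReal.tsum_le_tsum fun k => ?_
        calc ENNReal.ofReal ((R / 2 ^ (k + 1)) ^ a) * μ (ball x (2 * (R / 2 ^ k)))
            ≤ ENNReal.ofReal ((R / 2 ^ (k + 1)) ^ a) *
                (C * ENNReal.ofReal ((2 * (R / 2 ^ k)) ^ d)) := by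
              gcongr
              exact hball _ _ (by positivity)
          _ = C * ENNReal.ofReal (2 ^ (d - a) * R ^ (a + d)) * ENNReal.ofReal q ^ k := by
              rw [mul_left_comm, ← ENNReal.ofReal_mul (by positivity),
                rpow_mul_rpow_dyadic_eq_geometric hR, ENNReal.ofReal_mul (by positivity),
                ENNReal.ofReal_pow (by positivity), mul_assoc]
    _ = C * ENNReal.ofReal (2 ^ (d - a) * R ^ (a + d)) * (1 - ENNReal.ofReal q)⁻¹ := by
        rw [ENNReal.tsum_mul_left, ENNReal.tsum_geometric]

end UpperAhlforsRegular

theorem isUpperAhlforsRegular_addHaar {E : Type*} [NormedAddCommGroup E] [NormedSpace ℝ E]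
    [FiniteDimensional ℝ E] [MeasurableSpace E] [BorelSpace E] [Nontrivial E] (μ : Measure E)
    [μ.IsAddHaarMeasure] : IsUpperAhlforsRegular μ (Module.finrank ℝ E) :=
  ⟨μ (ball 0 1), measure_ball_lt_top.ne, fun x r hr => by
    rw [Measure.addHaar_ball μ x hr.le, Real.rpow_natCast, mul_comm]⟩

theorem LipschitzWith.hausdorffMeasure_image_ball_le {E : Type*} [EMetricSpace E]
    [MeasurableSpace E] [BorelSpace E] {k : ℕ} {K : ℝ≥0} {G : (Fin k → ℝ) → E}
    (hG : LipschitzWith K G) (c : Fin k → ℝ) {r : ℝ} (hr : 0 < r) :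
    μH[k] (G '' ball c r) ≤ (K : ℝ≥0∞) ^ (k : ℝ) * ENNReal.ofReal ((2 * r) ^ k) := by
  have hvol : (μH[k] : Measure (Fin k → ℝ)) = volume := by
    simpa using hausdorffMeasure_pi_real (ι := Fin k)
  calc μH[k] (G '' ball c r) ≤ (K : ℝ≥0∞) ^ (k : ℝ) * μH[k] (ball c r) :=
        hG.hausdorffMeasure_image_le k.cast_nonneg _
    _ = (K : ℝ≥0∞) ^ (k : ℝ) * ENNReal.ofReal ((2 * r) ^ k) := by
        rw [hvol, Real.volume_pi_ball c hr, Fintype.card_fin]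

theorem exists_hausdorffMeasure_graph_inter_ball_le {E : Type*} [NormedAddCommGroup E]
    [NormedSpace ℝ E] [MeasurableSpace E] [BorelSpace E] (k : ℕ) (L : ℝ≥0) :
    ∃ C : ℝ≥0∞, C ≠ ∞ ∧ ∀ (A : E ≃ᵃⁱ[ℝ] WithLp 2 (Euc k × ℝ)) (φ : Euc k → ℝ),
      LipschitzWith L φ → ∀ (x : E) (r : ℝ), 0 < r →
        μH[k] ({X | chartSnd (A X) = φ (chartFst (A X))} ∩ ball x r) ≤
          C * ENNReal.ofReal (r ^ k) := by
  let graph (A : E ≃ᵃⁱ[ℝ] WithLp 2 (Euc k × ℝ)) (φ : Euc k → ℝ) (y : Fin k → ℝ) : E :=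
    A.symm (WithLp.toLp 2 (WithLp.toLp 2 y, φ (WithLp.toLp 2 y)))
  obtain ⟨K, hK⟩ : ∃ K : ℝ≥0, ∀ A φ, LipschitzWith L φ → LipschitzWith K (graph A φ) :=
    ⟨_, fun A φ hφ => A.symm.lipschitz.comp <| (WithLp.prod_lipschitzWith_toLp 2 _ _).comp <|
      (PiLp.lipschitzWith_toLp 2 _).prodMk (hφ.comp (PiLp.lipschitzWith_toLp 2 _))⟩
  refine ⟨(K : ℝ≥0∞) ^ (k : ℝ) * ENNReal.ofReal (2 ^ k), by finiteness, fun A φ hφ x r hr => ?_⟩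
  have hsub : {X | chartSnd (A X) = φ (chartFst (A X))} ∩ ball x r ⊆
      graph A φ '' ball (WithLp.ofLp (chartFst (A x))) r := by
    rintro X ⟨hX, hXx⟩
    refine ⟨WithLp.ofLp (chartFst (A X)), ?_, ?_⟩
    · calc dist (WithLp.ofLp (chartFst (A X))) (WithLp.ofLp (chartFst (A x)))
          ≤ dist (chartFst (A X)) (chartFst (A x)) := by
            simpa using (PiLp.lipschitzWith_ofLp 2 _).dist_le_mul (chartFst (A X)) (chartFst (A x))
        _ ≤ dist (A X) (A x) := WithLp.dist_fst_le _ _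
        _ < r := by rwa [A.dist_map]
    · change A.symm (WithLp.toLp 2 (chartFst (A X), φ (chartFst (A X)))) = X
      rw [← hX.out]
      exact A.symm_apply_apply X
  calc μH[k] ({X | chartSnd (A X) = φ (chartFst (A X))} ∩ ball x r)
      ≤ (K : ℝ≥0∞) ^ (k : ℝ) * ENNReal.ofReal ((2 * r) ^ k) :=
        (measure_mono hsub).trans ((hK A φ hφ).hausdorffMeasure_image_ball_le _ hr)
    _ = (K : ℝ≥0∞) ^ (k : ℝ) * ENNReal.ofReal (2 ^ k) * ENNReal.ofReal (r ^ k) := by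
        rw [mul_pow, ENNReal.ofReal_mul (by positivity), mul_assoc]

theorem Bornology.IsBounded.isCompact_frontier {E : Type*} [PseudoMetricSpace E] [ProperSpace E]
    {s : Set E} (hs : Bornology.IsBounded s) : IsCompact (frontier s) :=
  hs.isCompact_closure.of_isClosed_subset isClosed_frontier frontier_subset_closure

theorem surfMeasure_compl_frontier (n : ℕ) (D : Set (Euc n)) :
    surfMeasure n D (frontier D)ᶜ = 0 := by
  rw [surfMeasure, Measure.restrict_apply' isClosed_frontier.measurableSet, compl_inter_self,
    measure_empty]

namespace IsBddLipschitzDomain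

variable {n : ℕ} {L : ℝ} {D : Set (Euc n)}

theorem exists_surfMeasure_ball_le (hD : IsBddLipschitzDomain n L D) (hn : 1 ≤ n) :
    ∃ C : ℝ≥0∞, C ≠ ∞ ∧ ∃ δ > 0, ∀ (y : Euc n) (r : ℝ), 0 < r → r ≤ δ →
      surfMeasure n D (ball y r) ≤ C * ENNReal.ofReal (r ^ ((n : ℝ) - 1)) := by
  obtain ⟨C, hC, hgraph⟩ :=
    exists_hausdorffMeasure_graph_inter_ball_le (E := Euc n) (n - 1) L.toNNReal
  have hdim : ((n - 1 : ℕ) : ℝ) = (n : ℝ) - 1 := by push_cast [hn]; ring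
  refine ⟨C, hC, hD.2.1.isCompact_frontier.exists_measure_ball_le_of_local
    (surfMeasure_compl_frontier n D) fun Q hQ => ?_⟩
  obtain ⟨U, A, φ, hφ, hUo, hQU, -, hfr⟩ := hD.2.2.2.2 Q hQ
  refine ⟨U, hUo, hQU, fun y r hr => ?_⟩
  calc surfMeasure n D (U ∩ ball y r)
      = μH[(n : ℝ) - 1] (U ∩ ball y r ∩ frontier D) :=
        Measure.restrict_apply' isClosed_frontier.measurableSet
    _ ≤ μH[(n : ℝ) - 1] ({X | chartSnd (A X) = φ (chartFst (A X))} ∩ ball y r) :=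
        measure_mono fun X ⟨⟨hXU, hXy⟩, hXD⟩ => ⟨(hfr X hXU).1 hXD, hXy⟩
    _ ≤ C * ENNReal.ofReal (r ^ ((n : ℝ) - 1)) := by
        simpa only [hdim, ← Real.rpow_natCast] using hgraph A φ hφ y r hr

theorem isFiniteMeasure_surfMeasure (hD : IsBddLipschitzDomain n L D) (hn : 1 ≤ n) :
    IsFiniteMeasure (surfMeasure n D) := by
  obtain ⟨C, hC, δ, hδ, hball⟩ := hD.exists_surfMeasure_ball_le hn
  exact hD.2.1.isCompact_frontier.isFiniteMeasure_of_measure_ball_lt_top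
    (surfMeasure_compl_frontier n D) hδ fun x _ => (hball x δ hδ le_rfl).trans_lt (by finiteness)

theorem isUpperAhlforsRegular_surfMeasure (hD : IsBddLipschitzDomain n L D) (hn : 1 ≤ n) :
    IsUpperAhlforsRegular (surfMeasure n D) ((n : ℝ) - 1) := by
  have := hD.isFiniteMeasure_surfMeasure hn
  obtain ⟨C, hC, δ, hδ, hball⟩ := hD.exists_surfMeasure_ball_le hn
  exact isUpperAhlforsRegular_of_measure_ball_le (by simpa using hn) hC hδ hball

end IsBddLipschitzDomain

theorem exists_rpow_mul_abs_log_add_le {s : ℝ} (hs : 0 < s) (c R : ℝ) :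
    ∃ M : ℝ, ∀ t : ℝ, 0 < t → t ≤ R → t ^ s * |Real.log t + c| ≤ M := by
  refine ⟨1 / s + R ^ s * |Real.log R| + R ^ s * |c|, fun t ht htR => ?_⟩
  have hts : t ^ s ≤ R ^ s := Real.rpow_le_rpow ht.le htR hs.le
  have hlog : t ^ s * |Real.log t| ≤ 1 / s + R ^ s * |Real.log R| := by
    rcases le_or_gt t 1 with ht1 | ht1
    · have := Real.abs_log_mul_self_rpow_lt t s ht ht1 hs
      rw [abs_mul, abs_of_pos (Real.rpow_pos_of_pos ht s)] at this
      nlinarith [abs_nonneg (Real.log R), Real.rpow_nonneg (ht.le.trans htR) s]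
    · rw [abs_of_nonneg (Real.log_nonneg ht1.le),
        abs_of_nonneg (Real.log_nonneg (ht1.le.trans htR))]
      have := mul_le_mul hts (Real.log_le_log ht htR) (Real.log_nonneg ht1.le)
        (Real.rpow_nonneg (ht.le.trans htR) s)
      linarith [one_div_pos.2 hs]
  calc t ^ s * |Real.log t + c| ≤ t ^ s * |Real.log t| + t ^ s * |c| := by
        rw [← mul_add]; gcongr; exact abs_add_le _ _
    _ ≤ 1 / s + R ^ s * |Real.log R| + R ^ s * |c| := by gcongr

theorem polyK_comm (n j : ℕ) (X Y : Euc n) : polyK n j X Y = polyK n j Y X := by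
  simp only [polyK, norm_sub_rev]

theorem measurable_polyK (n j : ℕ) : Measurable (Function.uncurry (polyK n j)) := by
  unfold polyK
  split_ifs <;> fun_prop

theorem exists_abs_polyK_le (n : ℕ) {j : ℕ} (hj : 1 ≤ j) (R : ℝ) :
    ∃ C : ℝ, ∀ X Y : Euc n, X ≠ Y → dist X Y ≤ R →
      |polyK n j X Y| ≤ C * dist X Y ^ (2 - (n : ℝ)) := by
  suffices h : ∃ C : ℝ, ∀ X Y : Euc n, 0 < ‖X - Y‖ → ‖X - Y‖ ≤ R →
      |polyK n j X Y| ≤ C * ‖X - Y‖ ^ (2 - (n : ℝ)) by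
    obtain ⟨C, hC⟩ := h
    refine ⟨C, fun X Y hXY hR => ?_⟩
    rw [dist_eq_norm] at *
    exact hC X Y (norm_pos_iff.2 (sub_ne_zero.2 hXY)) hR
  by_cases h1 : j = 1
  · refine ⟨|((n : ℝ) - 2) * sphereArea n|⁻¹, fun X Y hXY _ => ?_⟩
    rw [polyK, if_pos h1, abs_div, abs_of_nonneg (by positivity), div_eq_inv_mul]
  have hj2 : (2 : ℝ) ≤ j := by exact_mod_cast (show 2 ≤ j by omega)
  have hsplit : ∀ t : ℝ, 0 < t →
      t ^ (2 * (j : ℝ) - n) = t ^ (2 * (j : ℝ) - 2) * t ^ (2 - (n : ℝ)) := fun t ht => by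
    rw [← Real.rpow_add ht]; ring_nf
  by_cases h2 : Odd n ∨ 2 * j ≤ n - 2
  · refine ⟨R ^ (2 * (j : ℝ) - 2) *
      |((n : ℝ) - 2) * sphereArea n * ∏ k ∈ Finset.Icc 1 (j - 1), gamK n k|⁻¹,
      fun X Y hXY hR => ?_⟩
    rw [polyK, if_neg h1, if_pos h2, abs_div, abs_of_nonneg (by positivity), hsplit _ hXY,
      div_eq_mul_inv, mul_right_comm]
    gcongr
    linarith
  · obtain ⟨M, hM⟩ := exists_rpow_mul_abs_log_add_le (s := 2 * j - 2) (by linarith) (polyC n j) R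
    refine ⟨M * |((n : ℝ) - 2) ^ 2 * sphereArea n * (∏ k ∈ Finset.Icc 1 (n / 2 - 2), gamK n k) *
        ∏ t ∈ Finset.Icc 1 (j - n / 2), deltaS n (2 * (t : ℝ))|⁻¹, fun X Y hXY hR => ?_⟩
    rw [polyK, if_neg h1, if_neg h2, abs_div, abs_mul, abs_of_nonneg (by positivity), hsplit _ hXY,
      div_eq_mul_inv, mul_right_comm _ (_ ^ (2 - (n : ℝ))), mul_right_comm _ (_ ^ (2 - (n : ℝ)))]
    gcongr
    exact hM _ hXY hR

theorem IsUpperAhlforsRegular.exists_lintegral_enorm_polyK_le {n j : ℕ} (hn : 3 ≤ n) (hj : 1 ≤ j)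
    {μ : Measure (Euc n)} {d : ℝ} (hμ : IsUpperAhlforsRegular μ d) (hd : (n : ℝ) - 2 < d)
    {R : ℝ} (hR : 0 < R) :
    ∃ A : ℝ≥0∞, A ≠ ∞ ∧ ∀ X : Euc n, (∀ᵐ Y ∂μ, Y ≠ X ∧ dist X Y ≤ R) →
      ∫⁻ Y, ‖polyK n j X Y‖ₑ ∂μ ≤ A := by
  have hn' : (3 : ℝ) ≤ n := by exact_mod_cast hn
  obtain ⟨C, hC⟩ := exists_abs_polyK_le n hj R
  obtain ⟨S, hS, hint⟩ := hμ.exists_lintegral_dist_rpow_le (a := 2 - n) (by linarith)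
    (by linarith) hR
  refine ⟨ENNReal.ofReal C * S, by finiteness, fun X hX => ?_⟩
  calc ∫⁻ Y, ‖polyK n j X Y‖ₑ ∂μ
      ≤ ∫⁻ Y, ENNReal.ofReal C * ENNReal.ofReal (dist X Y ^ (2 - (n : ℝ))) ∂μ := by
        refine lintegral_mono_ae (hX.mono fun Y hY => ?_)
        rw [Real.enorm_eq_ofReal_abs, ← ENNReal.ofReal_mul' (by positivity)]
        exact ENNReal.ofReal_le_ofReal (hC X Y hY.1.symm hY.2)
    _ = ENNReal.ofReal C * ∫⁻ Y, ENNReal.ofReal (dist X Y ^ (2 - (n : ℝ))) ∂μ :=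
        lintegral_const_mul' _ _ ENNReal.ofReal_ne_top
    _ ≤ ENNReal.ofReal C * S := by
        gcongr
        exact hint X (hX.mono fun Y hY => hY.2)

theorem IsBddLipschitzDomain.exists_lintegral_enorm_polyK_le {n : ℕ} (hn : 3 ≤ n) {L : ℝ}
    {D : Set (Euc n)} (hD : IsBddLipschitzDomain n L D) {j : ℕ} (hj : 1 ≤ j) :
    ∃ A B : ℝ≥0∞, A ≠ ∞ ∧ B ≠ ∞ ∧
      (∀ᵐ X ∂(volume : Measure (Euc n)).restrict D,
        ∫⁻ Q, ‖polyK n j X Q‖ₑ ∂surfMeasure n D ≤ A) ∧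
      ∀ᵐ Q ∂surfMeasure n D, ∫⁻ X in D, ‖polyK n j X Q‖ₑ ≤ B := by
  have hσ := hD.isUpperAhlforsRegular_surfMeasure (by omega)
  have hvol : IsUpperAhlforsRegular ((volume : Measure (Euc n)).restrict D) n := by
    have : Nonempty (Fin n) := ⟨⟨0, by omega⟩⟩
    simpa using (isUpperAhlforsRegular_addHaar (volume : Measure (Euc n))).mono
      Measure.restrict_le_self
  set R := diam D + 1
  have hgeom : ∀ X ∈ D, ∀ Q ∈ frontier D, Q ≠ X ∧ dist X Q ≤ R := fun X hX Q hQ =>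
    ⟨fun h => hD.1.inter_frontier_eq.subset ⟨hX, h ▸ hQ⟩,
      (dist_le_diam_of_mem hD.2.1.closure (subset_closure hX) (frontier_subset_closure hQ)).trans
        (by rw [diam_closure]; linarith)⟩
  have hR : 0 < R := by positivity
  have hD_ae : ∀ᵐ X ∂(volume : Measure (Euc n)).restrict D, X ∈ D :=
    ae_restrict_mem hD.1.measurableSet
  have hσ_ae : ∀ᵐ Q ∂surfMeasure n D, Q ∈ frontier D :=
    ae_restrict_mem isClosed_frontier.measurableSet
  obtain ⟨A, hA, hAσ⟩ := hσ.exists_lintegral_enorm_polyK_le hn hj (by linarith) hR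
  obtain ⟨B, hB, hBvol⟩ := hvol.exists_lintegral_enorm_polyK_le hn hj (by linarith) hR
  refine ⟨A, B, hA, hB, ?_, ?_⟩
  · filter_upwards [hD_ae] with X hX
    exact hAσ X (hσ_ae.mono fun Q hQ => hgeom X hX Q hQ)
  · filter_upwards [hσ_ae] with Q hQ
    simp_rw [polyK_comm n j _ Q]
    refine hBvol Q (hD_ae.mono fun X hX => ?_)
    obtain ⟨hne, hdist⟩ := hgeom X hX Q hQ
    exact ⟨hne.symm, dist_comm Q X ▸ hdist⟩

/-- `𝓜_j : L^p(∂D, σ) → L^p(D)` is bounded for `j ≥ 1` and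
`1 ≤ p ≤ ∞`, the `L^p(D)` norm taken with respect to Lebesgue measure on `D`. -/
theorem mlp_Lp_bounded
    (n : ℕ) (hn : 3 ≤ n) (L : ℝ) (D : Set (Euc n)) (hD : IsBddLipschitzDomain n L D)
    (j : ℕ) (hj : 1 ≤ j) (p : ℝ≥0∞) (hp : 1 ≤ p) :
    ∃ C : ℝ, 0 < C ∧
      ∀ f : Euc n → ℝ, MemLp f p (surfMeasure n D) →
        eLpNorm (mlp n j (surfMeasure n D) f) p ((volume : Measure (Euc n)).restrict D)
          ≤ ENNReal.ofReal C * eLpNorm f p (surfMeasure n D) := by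
  have := hD.isFiniteMeasure_surfMeasure (by omega)
  obtain ⟨A, B, hA, hB, hAσ, hBvol⟩ := hD.exists_lintegral_enorm_polyK_le hn hj
  set K := A ^ (1 - p⁻¹).toReal * B ^ p⁻¹.toReal
  have hK : K ≠ ∞ := by finiteness
  refine ⟨K.toReal + 1, by positivity, fun f hf => ?_⟩
  calc eLpNorm (mlp n j (surfMeasure n D) f) p ((volume : Measure (Euc n)).restrict D)
      ≤ K * eLpNorm f p (surfMeasure n D) :=
        eLpNorm_integral_kernel_mul_le (measurable_polyK n j) hAσ hBvol hp hf.1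
    _ ≤ ENNReal.ofReal (K.toReal + 1) * eLpNorm f p (surfMeasure n D) := by
        gcongr
        exact (ENNReal.le_ofReal_iff_toReal_le hK (by positivity)).2 (by linarith)
end
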